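/- The number of cycles (in cycle-type sense) of the permutation f₃(w) equals the number of indices i ∈ {1,…,n} with w[i] = 1; the same holds for f₄(w). In particular, f₃(w) and f₄(w) always have the same number of cycles. -/

import Mathlib

/-! In both constructions a letter `w i = 1` is exactly the step that opens a new cycle.
For `f₃` the cycles are written out, so it suffices to count the lists produced.
For `f₄`, step `m + 1` either adjoins the fixed point `m + 1` (one more orbit) or, with
`c = w (m + 1) - 1`, replaces `σ` by `σ ∘ swap c (m + 1)`: this splices `m + 1` into the cycle
of `c` right after `c`, so the orbits are in bijection with the old ones. -/

/-- `IsWord n w` : `w` encodes a word in `[1] × [2] × ⋯ × [n]` (1-indexed letters). -/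
def IsWord (n : ℕ) (w : ℕ → ℕ) : Prop :=
  ∀ i, 1 ≤ i → i ≤ n → 1 ≤ w i ∧ w i ≤ i

/-- `IsPermList n l` : `l` is the one-line notation of a permutation of `{1,…,n}`. -/
def IsPermList (n : ℕ) (l : List ℕ) : Prop :=
  l.Perm (List.range' 1 n)

/-- `f₁` : at step `k` insert the letter `k` at position `w k` from the right. -/
def f1List (n : ℕ) (w : ℕ → ℕ) : List ℕ :=
  (List.range n).foldl (fun L k => L.insertIdx (k + 1 - w (k + 1)) (k + 1)) []

/-- Auxiliary for `f₂`: entry at position `i` is the `w i`-th smallest available number. -/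
def f2Go (w : ℕ → ℕ) : ℕ → List ℕ → List ℕ
  | 0, _ => []
  | i + 1, avail =>
      let x := avail.getD (w (i + 1) - 1) 0
      f2Go w i (avail.erase x) ++ [x]

/-- `f₂` : the entry at position `i` is the `w i`-th smallest element of `{1,…,n}`
not occurring at positions `i+1,…,n`. -/
def f2List (n : ℕ) (w : ℕ → ℕ) : List ℕ :=
  f2Go w n (List.range' 1 n)

/-- `g₁` : at step `k` insert the letter `k` at position `w k` from the left. -/
def g1List (n : ℕ) (w : ℕ → ℕ) : List ℕ :=
  (List.range n).foldl (fun L k => L.insertIdx (w (k + 1) - 1) (k + 1)) []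

/-- Auxiliary for `g₂`. -/
def g2Go (w : ℕ → ℕ) : ℕ → List ℕ → List ℕ
  | 0, _ => []
  | j + 1, avail =>
      let x := avail.getD (w (j + 1) - 1) 0
      x :: g2Go w j (avail.erase x)

/-- `g₂` : the entry at position `i` is the `w (n+1-i)`-th smallest element of `{1,…,n}`
not occurring at positions `1,…,i-1`. -/
def g2List (n : ℕ) (w : ℕ → ℕ) : List ℕ :=
  g2Go w n (List.range' 1 n)

/-- Apply a single cycle, written as a list, to `x`. -/
def applyCycle (c : List ℕ) (x : ℕ) : ℕ :=
  if x ∈ c then c.getD ((c.idxOf x + 1) % c.length) x else x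

/-- Apply a permutation given in cycle notation (a list of cycles) to `x`. -/
def applyCycles (cs : List (List ℕ)) (x : ℕ) : ℕ :=
  match cs.find? (fun c => c.contains x) with
  | some c => applyCycle c x
  | none => x

/-- Auxiliary for `f₃`: arguments are the index being read, the closed cycles,
the current cycle, and the list of unused letters (sorted). -/
def f3Go (w : ℕ → ℕ) : ℕ → List (List ℕ) → List ℕ → List ℕ → List (List ℕ)
  | 0, done, cur, _ => done ++ [cur]
  | 1, done, cur, _ => done ++ [cur]
  | i + 2, done, cur, avail =>
      if w (i + 2) = 1 then
        f3Go w (i + 1) (done ++ [cur]) [avail.headD 0] avail.tail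
      else
        let x := avail.getD (w (i + 2) - 2) 0
        f3Go w (i + 1) done (cur ++ [x]) (avail.erase x)

/-- `f₃` in cycle notation: reading `w` from position `n` down to `2`, if `w i > 1`
append the `(w i - 1)`-th smallest unused letter of `{2,…,n}` to the current cycle,
and if `w i = 1` close the current cycle and start a new one with the smallest
unused letter.  The first cycle starts with `1`. -/
def f3Cycles (n : ℕ) (w : ℕ → ℕ) : List (List ℕ) :=
  f3Go w n [] [1] (List.range' 2 (n - 1))

/-- One-line notation of `f₃ w`. -/
def f3OneLine (n : ℕ) (w : ℕ → ℕ) : List ℕ :=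
  (List.range' 1 n).map (applyCycles (f3Cycles n w))

/-- `f₄` as a function: recursively, if `w (m+1) = 1` adjoin the fixed point `m+1`,
and if `w (m+1) = k > 1` insert `m+1` immediately after `k - 1` in its cycle. -/
def f4Fun (w : ℕ → ℕ) : ℕ → ℕ → ℕ
  | 0, x => x
  | m + 1, x =>
      if w (m + 1) = 1 then f4Fun w m x
      else if x = w (m + 1) - 1 then m + 1
      else if x = m + 1 then f4Fun w m (w (m + 1) - 1)
      else f4Fun w m x

/-- One-line notation of `f₄ w`. -/
def f4OneLine (n : ℕ) (w : ℕ → ℕ) : List ℕ :=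
  (List.range' 1 n).map (f4Fun w n)

/-- One-line notation of the inverse of the permutation with one-line notation `l`. -/
def invList (n : ℕ) (l : List ℕ) : List ℕ :=
  (List.range' 1 n).map (fun k => l.idxOf k + 1)

/-- The permutation (as a function) with one-line notation `l`. -/
def permOf (l : List ℕ) (k : ℕ) : ℕ := l.getD (k - 1) 0

/-- The forward orbit of `x` under `σ`. -/
def orbitOf (σ : ℕ → ℕ) (x : ℕ) : Set ℕ := {y | ∃ m, σ^[m] x = y}

/-- The number of orbits of `σ` on `{1,…,n}`. -/
noncomputable def numCycles (n : ℕ) (σ : ℕ → ℕ) : ℕ :=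
  {s : Set ℕ | ∃ x, 1 ≤ x ∧ x ≤ n ∧ s = orbitOf σ x}.ncard

open Function Set

section Orbits

variable {σ : ℕ → ℕ} {S : Set ℕ}

lemma mem_orbitOf_self (σ : ℕ → ℕ) (x : ℕ) : x ∈ orbitOf σ x := ⟨0, rfl⟩

lemma apply_mem_orbitOf {x y : ℕ} (h : y ∈ orbitOf σ x) : σ y ∈ orbitOf σ x := by
  obtain ⟨m, rfl⟩ := h
  exact ⟨m + 1, iterate_succ_apply' σ m x⟩

lemma orbitOf_subset_of_mem {x y : ℕ} (h : y ∈ orbitOf σ x) : orbitOf σ y ⊆ orbitOf σ x := by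
  obtain ⟨m, rfl⟩ := h
  rintro z ⟨a, rfl⟩
  exact ⟨a + m, iterate_add_apply ..⟩

lemma orbitOf_subset (hm : MapsTo σ S S) {x : ℕ} (hx : x ∈ S) : orbitOf σ x ⊆ S := by
  rintro z ⟨a, rfl⟩
  exact hm.iterate a hx

lemma orbitOf_eq_singleton {x : ℕ} (h : σ x = x) : orbitOf σ x = {x} := by
  ext z
  constructor
  · rintro ⟨a, rfl⟩
    exact iterate_fixed h a
  · rintro rfl
    exact mem_orbitOf_self σ z

lemma mem_periodicPts_of_injOn (hS : S.Finite) (hm : MapsTo σ S S) (hi : InjOn σ S) {x : ℕ}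
    (hx : x ∈ S) : x ∈ periodicPts σ := by
  have : Finite S := hS
  have hper : (⟨x, hx⟩ : S) ∈ periodicPts (hm.restrict σ S S) := by
    rw [injective_iff_periodicPts_eq_univ.1 (hm.restrict_inj.2 hi)]
    trivial
  obtain ⟨p, hp, hpx⟩ := hper
  refine ⟨p, hp, ?_⟩
  simpa [IsPeriodicPt, IsFixedPt, hm.iterate_restrict] using congrArg Subtype.val hpx

lemma orbitOf_eq_of_mem (hS : S.Finite) (hm : MapsTo σ S S) (hi : InjOn σ S) {x y : ℕ}
    (hx : x ∈ S) (hy : y ∈ orbitOf σ x) : orbitOf σ y = orbitOf σ x := by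
  refine (orbitOf_subset_of_mem hy).antisymm (orbitOf_subset_of_mem ?_)
  obtain ⟨p, hp, hpx⟩ := mem_periodicPts_of_injOn hS hm hi hx
  obtain ⟨a, rfl⟩ := hy
  refine ⟨p * a - a, ?_⟩
  rw [← iterate_add_apply, Nat.sub_add_cancel (Nat.le_mul_of_pos_left a hp)]
  exact (hpx.mul_const a).eq

lemma numCycles_eq_ncard_image (n : ℕ) (σ : ℕ → ℕ) :
    numCycles n σ = (orbitOf σ '' Icc 1 n).ncard := by
  unfold numCycles
  congr 1
  ext s
  simp only [mem_image, mem_Icc, mem_ofPred_eq, and_assoc, eq_comm]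

end Orbits

section Insertion

variable {σ : ℕ → ℕ} {S : Set ℕ} {p : ℕ}

lemma mapsTo_insert_of_fixed (hm : MapsTo σ S S) (hp : σ p = p) :
    MapsTo σ (insert p S) (insert p S) := by
  rintro x (rfl | hx)
  · rw [hp]
    exact mem_insert x S
  · exact mem_insert_of_mem p (hm hx)

lemma injOn_insert_of_fixed (hm : MapsTo σ S S) (hi : InjOn σ S) (hpS : p ∉ S) (hp : σ p = p) :
    InjOn σ (insert p S) := by
  refine (injOn_insert hpS).2 ⟨hi, ?_⟩
  rintro ⟨x, hx, hxp⟩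
  exact hpS (hp ▸ hxp ▸ hm hx)

lemma ncard_image_orbitOf_insert_of_fixed (hS : S.Finite) (hm : MapsTo σ S S) (hpS : p ∉ S)
    (hp : σ p = p) : (orbitOf σ '' insert p S).ncard = (orbitOf σ '' S).ncard + 1 := by
  rw [image_insert_eq, orbitOf_eq_singleton hp, ncard_insert_of_notMem _ (hS.image _)]
  rintro ⟨x, hx, hxp⟩
  exact hpS (orbitOf_subset hm hx (hxp ▸ mem_singleton p))

variable {c : ℕ}

lemma mapsTo_swap_insert (hc : c ∈ S) : MapsTo (Equiv.swap c p) (insert p S) (insert p S) := by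
  intro x hx
  rcases eq_or_ne x c with rfl | hxc
  · simp
  rcases eq_or_ne x p with rfl | hxp
  · simpa using mem_insert_of_mem x hc
  · rwa [Equiv.swap_apply_of_ne_of_ne hxc hxp]

lemma orbitOf_comp_swap (hp : σ p = p) {x : ℕ} (hpx : p ∉ orbitOf σ x) :
    orbitOf (σ ∘ Equiv.swap c p) x = orbitOf σ x ∪ {y | y = p ∧ c ∈ orbitOf σ x} := by
  set τ := σ ∘ Equiv.swap c p
  have hτc : τ c = p := by simp [τ, hp]
  have hτp : τ p = σ c := by simp [τ]
  have hτ : ∀ y, y ≠ c → y ≠ p → τ y = σ y := fun y hyc hyp => by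
    simp [τ, Equiv.swap_apply_of_ne_of_ne hyc hyp]
  have hsub : orbitOf σ x ⊆ orbitOf τ x := by
    refine orbitOf_subset (fun y hy => ?_) (mem_orbitOf_self τ x)
    rcases eq_or_ne y c with rfl | hyc
    · rw [← hτp, ← hτc]
      exact apply_mem_orbitOf (apply_mem_orbitOf hy)
    rcases eq_or_ne y p with rfl | hyp
    · rwa [hp]
    · rw [← hτ y hyc hyp]
      exact apply_mem_orbitOf hy
  refine (orbitOf_subset ?_ (mem_union_left _ (mem_orbitOf_self σ x))).antisymm
    (union_subset hsub ?_)
  · rintro y (hy | ⟨rfl, hcx⟩)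
    · rcases eq_or_ne y c with rfl | hyc
      · exact Or.inr ⟨hτc, hy⟩
      · rw [hτ y hyc (ne_of_mem_of_not_mem hy hpx)]
        exact Or.inl (apply_mem_orbitOf hy)
    · rw [hτp]
      exact Or.inl (apply_mem_orbitOf hcx)
  · rintro y ⟨rfl, hcx⟩
    rw [← hτc]
    exact apply_mem_orbitOf (hsub hcx)

lemma mapsTo_comp_swap_insert (hm : MapsTo σ S S) (hc : c ∈ S) (hp : σ p = p) :
    MapsTo (σ ∘ Equiv.swap c p) (insert p S) (insert p S) :=
  (mapsTo_insert_of_fixed hm hp).comp (mapsTo_swap_insert hc)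

lemma injOn_comp_swap_insert (hm : MapsTo σ S S) (hi : InjOn σ S) (hc : c ∈ S) (hpS : p ∉ S)
    (hp : σ p = p) : InjOn (σ ∘ Equiv.swap c p) (insert p S) :=
  (injOn_insert_of_fixed hm hi hpS hp).comp (Equiv.injective _).injOn (mapsTo_swap_insert hc)

lemma ncard_image_orbitOf_insert_comp_swap (hS : S.Finite) (hm : MapsTo σ S S)
    (hi : InjOn σ S) (hc : c ∈ S) (hpS : p ∉ S) (hp : σ p = p) :
    (orbitOf (σ ∘ Equiv.swap c p) '' insert p S).ncard = (orbitOf σ '' S).ncard := by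
  set τ := σ ∘ Equiv.swap c p
  set G : Set ℕ → Set ℕ := fun s => s ∪ {y | y = p ∧ c ∈ s}
  have hpx : ∀ x ∈ S, p ∉ orbitOf σ x := fun x hx h => hpS (orbitOf_subset hm hx h)
  have horb : ∀ x ∈ S, orbitOf τ x = G (orbitOf σ x) := fun x hx =>
    orbitOf_comp_swap hp (hpx x hx)
  have horb_p : orbitOf τ p = orbitOf τ c :=
    orbitOf_eq_of_mem (hS.insert p) (mapsTo_comp_swap_insert hm hc hp)
      (injOn_comp_swap_insert hm hi hc hpS hp) (mem_insert_of_mem p hc) ⟨1, by simp [hp]⟩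
  have himg : orbitOf τ '' insert p S = G '' (orbitOf σ '' S) := by
    rw [image_insert_eq, image_congr horb, ← image_image, horb_p, horb c hc]
    exact insert_eq_of_mem (mem_image_of_mem G (mem_image_of_mem _ hc))
  have hG : ∀ s, p ∉ s → G s \ {p} = s := fun s hs => by
    ext y
    by_cases hy : y = p <;> simp_all [G]
  have hGinj : InjOn G (orbitOf σ '' S) := by
    rintro _ ⟨x, hx, rfl⟩ _ ⟨y, hy, rfl⟩ h
    rw [← hG _ (hpx x hx), h, hG _ (hpx y hy)]
  rw [himg, hGinj.ncard_image]

end Insertion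

lemma Icc_one_add_one (m : ℕ) : Icc 1 (m + 1) = insert (m + 1) (Icc 1 m) :=
  (insert_Icc_right_eq_Icc_succ (by omega : 1 ≤ m + 1)).symm

lemma length_filter_range'_add_one (p : ℕ → Bool) (s k : ℕ) :
    ((List.range' s (k + 1)).filter p).length =
      ((List.range' s k).filter p).length + if p (s + k) then 1 else 0 := by
  rw [List.range'_concat, List.filter_append, List.length_append, one_mul]
  cases h : p (s + k) <;> simp [h]

lemma IsWord.mono {n m : ℕ} {w : ℕ → ℕ} (hw : IsWord n w) (hmn : m ≤ n) : IsWord m w :=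
  fun i h1 h2 => hw i h1 (h2.trans hmn)

section F4

variable {w : ℕ → ℕ} {m : ℕ}

lemma IsWord.sub_one_mem_Icc (hw : IsWord (m + 1) w) (h : w (m + 1) ≠ 1) :
    w (m + 1) - 1 ∈ Icc 1 m := by
  have := hw (m + 1) (by omega) le_rfl
  exact ⟨by omega, by omega⟩

lemma f4Fun_of_lt (hw : IsWord m w) {x : ℕ} (hx : m < x) : f4Fun w m x = x := by
  induction m with
  | zero => rfl
  | succ m ih =>
    have := hw (m + 1) (by omega) le_rfl
    simp only [f4Fun, if_neg (by omega : x ≠ w (m + 1) - 1), if_neg (by omega : x ≠ m + 1),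
      ih (hw.mono m.le_succ) (by omega), ite_self]

lemma f4Fun_succ_of_eq_one (h : w (m + 1) = 1) : f4Fun w (m + 1) = f4Fun w m := by
  funext x
  simp [f4Fun, h]

lemma f4Fun_succ_of_ne_one (hw : IsWord m w) (h : w (m + 1) ≠ 1) :
    f4Fun w (m + 1) = f4Fun w m ∘ Equiv.swap (w (m + 1) - 1) (m + 1) := by
  funext x
  simp only [f4Fun, if_neg h, comp_apply]
  split_ifs with hxc hxp
  · rw [hxc, Equiv.swap_apply_left, f4Fun_of_lt hw (lt_add_one m)]
  · rw [hxp, Equiv.swap_apply_right]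
  · rw [Equiv.swap_apply_of_ne_of_ne hxc hxp]

lemma f4Fun_mapsTo_injOn (hw : IsWord m w) :
    MapsTo (f4Fun w m) (Icc 1 m) (Icc 1 m) ∧ InjOn (f4Fun w m) (Icc 1 m) := by
  induction m with
  | zero => simp
  | succ m ih =>
    have hw' := hw.mono m.le_succ
    obtain ⟨hm, hi⟩ := ih hw'
    have hpS : m + 1 ∉ Icc 1 m := by simp
    have hp : f4Fun w m (m + 1) = m + 1 := f4Fun_of_lt hw' (lt_add_one m)
    rw [Icc_one_add_one]
    by_cases h : w (m + 1) = 1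
    · rw [f4Fun_succ_of_eq_one h]
      exact ⟨mapsTo_insert_of_fixed hm hp, injOn_insert_of_fixed hm hi hpS hp⟩
    · have hc := hw.sub_one_mem_Icc h
      rw [f4Fun_succ_of_ne_one hw' h]
      exact ⟨mapsTo_comp_swap_insert hm hc hp, injOn_comp_swap_insert hm hi hc hpS hp⟩

lemma numCycles_f4Fun (hw : IsWord m w) :
    numCycles m (f4Fun w m) = ((List.range' 1 m).filter (fun i => decide (w i = 1))).length := by
  induction m with
  | zero => simp [numCycles_eq_ncard_image]
  | succ m ih =>
    have hw' := hw.mono m.le_succ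
    obtain ⟨hm, hi⟩ := f4Fun_mapsTo_injOn hw'
    have hpS : m + 1 ∉ Icc 1 m := by simp
    have hp : f4Fun w m (m + 1) = m + 1 := f4Fun_of_lt hw' (lt_add_one m)
    rw [length_filter_range'_add_one, ← ih hw', numCycles_eq_ncard_image,
      numCycles_eq_ncard_image, Icc_one_add_one, add_comm 1 m]
    by_cases h : w (m + 1) = 1
    · rw [f4Fun_succ_of_eq_one h, ncard_image_orbitOf_insert_of_fixed (finite_Icc 1 m) hm hpS hp]
      simp [h]
    · rw [f4Fun_succ_of_ne_one hw' h, ncard_image_orbitOf_insert_comp_swap (finite_Icc 1 m) hm hi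
        (hw.sub_one_mem_Icc h) hpS hp]
      simp [h]

end F4

section CycleNotation

lemma eq_of_mem_of_mem_of_nodup_flatten {α : Type*} {L : List (List α)} (hnd : L.flatten.Nodup)
    {l₁ l₂ : List α} (h₁ : l₁ ∈ L) (h₂ : l₂ ∈ L) {a : α} (ha₁ : a ∈ l₁) (ha₂ : a ∈ l₂) :
    l₁ = l₂ := by
  by_contra hne
  have : Std.Symm (α := List α) List.Disjoint := ⟨fun _ _ h => h.symm⟩
  exact (List.nodup_flatten.1 hnd).2.forall h₁ h₂ hne ha₁ ha₂

lemma nodup_of_nodup_flatten {α : Type*} {L : List (List α)} (hnd : L.flatten.Nodup)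
    (hne : ∀ l ∈ L, l ≠ []) : L.Nodup :=
  (List.nodup_flatten.1 hnd).2.imp_of_mem fun h₁ _ hdis heq => by
    obtain ⟨a, ha⟩ := List.exists_mem_of_ne_nil _ (hne _ h₁)
    exact hdis ha (heq ▸ ha)

variable {cs : List (List ℕ)} {l : List ℕ}

lemma applyCycles_eq_applyCycle (hnd : cs.flatten.Nodup) (hl : l ∈ cs) {x : ℕ} (hx : x ∈ l) :
    applyCycles cs x = applyCycle l x := by
  unfold applyCycles
  cases hfind : cs.find? (fun l => l.contains x) with
  | none =>
    simp only [List.find?_eq_none] at hfind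
    simpa [hx] using hfind l hl
  | some l' =>
    have hxl' : x ∈ l' := by simpa using List.find?_some hfind
    rw [eq_of_mem_of_mem_of_nodup_flatten hnd (List.mem_of_find?_eq_some hfind) hl hxl' hx]

lemma applyCycle_getElem (hl : l.Nodup) {k : ℕ} (hk : k < l.length) :
    applyCycle l l[k] = l[(k + 1) % l.length]'(Nat.mod_lt _ (by omega)) := by
  rw [applyCycle, if_pos (List.getElem_mem hk), hl.idxOf_getElem, List.getD_eq_getElem]

lemma iterate_applyCycles_getElem (hnd : cs.flatten.Nodup) (hl : l ∈ cs) {k : ℕ}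
    (hk : k < l.length) (j : ℕ) :
    (applyCycles cs)^[j] l[k] = l[(k + j) % l.length]'(Nat.mod_lt _ (by omega)) := by
  induction j with
  | zero => simp [Nat.mod_eq_of_lt hk]
  | succ j ih =>
    rw [iterate_succ_apply', ih, applyCycles_eq_applyCycle hnd hl (List.getElem_mem _),
      applyCycle_getElem ((List.nodup_flatten.1 hnd).1 l hl)]
    simp only [Nat.mod_add_mod, add_assoc]

lemma orbitOf_applyCycles (hnd : cs.flatten.Nodup) (hl : l ∈ cs) {x : ℕ} (hx : x ∈ l) :
    orbitOf (applyCycles cs) x = {y | y ∈ l} := by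
  obtain ⟨k, hk, rfl⟩ := List.getElem_of_mem hx
  ext z
  constructor
  · rintro ⟨j, rfl⟩
    rw [iterate_applyCycles_getElem hnd hl hk]
    exact List.getElem_mem _
  · intro hz
    obtain ⟨i, hi, rfl⟩ := List.getElem_of_mem hz
    refine ⟨l.length + i - k, ?_⟩
    have : (k + (l.length + i - k)) % l.length = i := by
      rw [show k + (l.length + i - k) = l.length + i by omega, Nat.add_mod_left,
        Nat.mod_eq_of_lt hi]
    simp only [iterate_applyCycles_getElem hnd hl hk, this]

lemma numCycles_applyCycles {n : ℕ} (hperm : cs.flatten.Perm (List.range' 1 n))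
    (hne : ∀ l ∈ cs, l ≠ []) : numCycles n (applyCycles cs) = cs.length := by
  have hnd : cs.flatten.Nodup := hperm.nodup_iff.2 List.nodup_range'
  have hmem : ∀ x, x ∈ Icc 1 n ↔ x ∈ cs.flatten := fun x => by
    rw [hperm.mem_iff, List.mem_range'_1, mem_Icc]
    omega
  have himg :
      orbitOf (applyCycles cs) '' Icc 1 n = (fun l : List ℕ => {y | y ∈ l}) '' {l | l ∈ cs} := by
    ext s
    constructor
    · rintro ⟨x, hx, rfl⟩
      obtain ⟨l, hl, hxl⟩ := List.mem_flatten.1 ((hmem x).1 hx)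
      exact ⟨l, hl, (orbitOf_applyCycles hnd hl hxl).symm⟩
    · rintro ⟨l, hl, rfl⟩
      obtain ⟨x, hxl⟩ := List.exists_mem_of_ne_nil l (hne l hl)
      exact ⟨x, (hmem x).2 (List.mem_flatten.2 ⟨l, hl, hxl⟩), orbitOf_applyCycles hnd hl hxl⟩
  have hinj : InjOn (fun l : List ℕ => {y | y ∈ l}) {l | l ∈ cs} := by
    intro l₁ h₁ l₂ h₂ he
    obtain ⟨y, hy⟩ := List.exists_mem_of_ne_nil l₁ (hne l₁ h₁)
    exact eq_of_mem_of_mem_of_nodup_flatten hnd h₁ h₂ hy ((Set.ext_iff.1 he y).1 hy)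
  rw [numCycles_eq_ncard_image, himg, hinj.ncard_image, ← List.coe_toFinset, ncard_coe_finset,
    List.toFinset_card_of_nodup (nodup_of_nodup_flatten hnd hne)]

end CycleNotation

section F3

variable {w : ℕ → ℕ}

lemma length_f3Go (i : ℕ) (done : List (List ℕ)) (cur avail : List ℕ) :
    (f3Go w i done cur avail).length =
      done.length + 1 + ((List.range' 2 (i - 1)).filter (fun j => decide (w j = 1))).length := by
  induction i, done, cur, avail using f3Go.induct w with
  | case1 | case2 => simp [f3Go]
  | case3 i done cur avail h ih =>
    simp only [f3Go, if_pos h, ih, Nat.succ_eq_add_one, Nat.add_sub_cancel,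
      length_filter_range'_add_one, add_comm 2 i]
    simp [h]
    omega
  | case4 i done cur avail h x ih =>
    rw [f3Go, if_neg h]
    refine ih.trans ?_
    simp only [Nat.succ_eq_add_one, Nat.add_sub_cancel, length_filter_range'_add_one, add_comm 2 i]
    simp [h]

lemma f3Go_ne_nil {i : ℕ} {done : List (List ℕ)} {cur avail : List ℕ}
    (hdone : ∀ c ∈ done, c ≠ []) (hcur : cur ≠ []) : ∀ c ∈ f3Go w i done cur avail, c ≠ [] := by
  induction i, done, cur, avail using f3Go.induct w with
  | case1 | case2 =>
    simpa [f3Go, or_imp, forall_and] using ⟨hdone, hcur⟩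
  | case3 i done cur avail h ih =>
    rw [f3Go, if_pos h]
    exact ih (by simpa [or_imp, forall_and] using ⟨hdone, hcur⟩) (List.cons_ne_nil _ _)
  | case4 i done cur avail h x ih =>
    rw [f3Go, if_neg h]
    exact ih hdone (by simp)

lemma flatten_f3Go_perm {i : ℕ} {done : List (List ℕ)} {cur avail : List ℕ} (hw : IsWord i w)
    (havail : avail.length = i - 1) :
    (f3Go w i done cur avail).flatten.Perm (done.flatten ++ cur ++ avail) := by
  induction i, done, cur, avail using f3Go.induct w with
  | case1 | case2 => simp_all [f3Go]
  | case3 i done cur avail h ih =>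
    obtain ⟨a, t, rfl⟩ := List.exists_cons_of_length_pos (by omega : 0 < avail.length)
    rw [f3Go, if_pos h]
    simpa using ih (hw.mono (by omega)) (by simpa using havail)
  | case4 i done cur avail h x ih =>
    have hwi := hw (i + 2) (by omega) le_rfl
    have hx : x ∈ avail := by
      rw [show x = avail.getD (w (i + 2) - 2) 0 from rfl, List.getD_eq_getElem _ _ (by omega)]
      exact List.getElem_mem _
    rw [f3Go, if_neg h]
    refine (ih (hw.mono (by omega)) (by rw [List.length_erase_of_mem hx]; omega)).trans ?_
    simpa using (List.perm_cons_erase hx).symm.append_left (done.flatten ++ cur)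

lemma numCycles_f3Cycles {n : ℕ} (hw : IsWord n w) :
    numCycles n (applyCycles (f3Cycles n w)) =
      ((List.range' 1 n).filter (fun i => decide (w i = 1))).length := by
  rcases n with _ | n
  · simp [numCycles_eq_ncard_image]
  have hrange : List.range' 1 (n + 1) = 1 :: List.range' 2 n := List.range'_succ ..
  have hw1 : w 1 = 1 := by
    have := hw 1 le_rfl (by omega)
    omega
  have hperm : (f3Cycles (n + 1) w).flatten.Perm (List.range' 1 (n + 1)) := by
    rw [f3Cycles, Nat.add_sub_cancel, hrange]
    simpa using flatten_f3Go_perm (cur := [1]) (done := []) hw (by simp)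
  rw [numCycles_applyCycles hperm (f3Go_ne_nil (by simp) (by simp)), f3Cycles, length_f3Go, hrange]
  simp [hw1]
  omega

end F3

/-- The number of cycles (orbits on `{1,…,n}`) of `f₃ w` and of `f₄ w` both equal
the number of indices `i ∈ {1,…,n}` with `w i = 1`. -/
theorem cycles_count (n : ℕ) (w : ℕ → ℕ) (hw : IsWord n w) :
    numCycles n (applyCycles (f3Cycles n w)) =
      ((List.range' 1 n).filter (fun i => decide (w i = 1))).length ∧
    numCycles n (f4Fun w n) =
      ((List.range' 1 n).filter (fun i => decide (w i = 1))).length :=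
  ⟨numCycles_f3Cycles hw, numCycles_f4Fun hw⟩
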